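/- Let gcd(m,n) = 1 and p an (m,n)-parking function. Then the iterates p^k · x_0 of the centroid x_0 of the fundamental alcove converge to the unique fixed point x_p of p; in fact p^k · x_0 = x_p for all sufficiently large k. -/

import Mathlib

/-- The shift during the action of letter `i` on `ℝ^m`: add `m` to coordinate `i`
and subtract `1` from every coordinate. -/
def shiftVec (m : ℕ) (i : Fin m) (x : Fin m → ℝ) : Fin m → ℝ :=
  fun j => x j - 1 + if j = i then (m : ℝ) else 0

/-- Sort the coordinates of a vector into weakly increasing order. -/
noncomputable def sortVec {m : ℕ} (x : Fin m → ℝ) : Fin m → ℝ := x ∘ Tuple.sort x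

/-- The action of the letter `i ∈ [m]` on `V^m`: shift, then re-sort. -/
noncomputable def letterV (m : ℕ) (i : Fin m) (x : Fin m → ℝ) : Fin m → ℝ :=
  sortVec (shiftVec m i x)

/-- `stepsV m p x i = p_{i-1} ⋯ p_1 p_0 ⋅ x`: the word acts letter by letter, the
letter `p 0` (rightmost) acting first. -/
noncomputable def stepsV (m : ℕ) (p : ℕ → Fin m) (x : Fin m → ℝ) : ℕ → (Fin m → ℝ)
  | 0 => x
  | k+1 => letterV m (p k) (stepsV m p x k)

/-- Membership in the Weyl chamber `V^m`: coordinates sum to `0` and are weakly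
increasing. -/
def InV (m : ℕ) (x : Fin m → ℝ) : Prop := (∑ j, x j) = 0 ∧ Monotone x

/-- The Euclidean norm on `ℝ^m`. -/
noncomputable def eNorm {m : ℕ} (x : Fin m → ℝ) : ℝ := Real.sqrt (∑ j, (x j) ^ 2)

/-- `p` (a word of length `n` in `[m]`, extended arbitrarily) is an
`(m,n)`-parking function: `#{j < n : p_j < i} ≥ i·n/m` for all `1 ≤ i ≤ m`. -/
def IsParking (m n : ℕ) (p : ℕ → Fin m) : Prop :=
  ∀ i : ℕ, 1 ≤ i → i ≤ m →
    i * n ≤ ((Finset.range n).filter (fun j => (p j : ℕ) < i)).card * m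

/-- The centroid of the fundamental alcove: coordinates `0, 1, …, m-1`, centered
so they sum to `0`. -/
noncomputable def fundCentroid (m : ℕ) : Fin m → ℝ :=
  fun j => (j : ℝ) - ((m : ℝ) - 1) / 2

/-!
Sorting is a contraction for the Euclidean distance (rearrangement inequality) and the shift of
a letter is a translation, so the squared distance between `p^k · x_0` and the orbit of `x_p`
under the same letters never increases. The orbit of `x_0` consists of complete residue systems
modulo `m`, and since `gcd(m, n) = 1` the periodicity of the orbit of `x_p` makes `x_p` one too.
Hence the squared distance is an integer, so it is eventually constant, and from then on every
step sorts both points by the same permutation: coordinates can be followed individually. Each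
coordinate of the orbit of `x_p` eventually jumps over every other one, with a gap less than `m`;
as the other point is sorted alike, it satisfies all the alcove inequalities of `x_p`. A complete
residue system with the same coordinate sum in the alcove of `x_p` is `x_p` itself.
-/

section Sorting

variable {m : ℕ}

lemma Monovary.monotone_comp_sort {α β : Type*} [Preorder α] [LinearOrder β] {f : Fin m → α}
    {g : Fin m → β} (hf : Monotone f) (hfg : Monovary f g) :
    Monotone (f ∘ Tuple.sort g) := by
  have hsort := (Tuple.eq_sort_iff (f := g) (σ := Tuple.sort g)).1 rfl
  refine monotone_iff_forall_lt.2 fun i j hij => ?_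
  rcases (hsort.1 hij.le).lt_or_eq with hlt | heq
  · exact hfg hlt
  · exact hf (hsort.2 i j hij heq).le

lemma sum_comp_sortVec (f : ℝ → ℝ) (x : Fin m → ℝ) :
    ∑ j, f (sortVec x j) = ∑ j, f (x j) :=
  Equiv.sum_comp (Tuple.sort x) (f ∘ x)

lemma sortVec_comp_perm (x : Fin m → ℝ) (σ : Equiv.Perm (Fin m)) :
    sortVec (x ∘ σ) = sortVec x :=
  Tuple.comp_perm_comp_sort_eq_comp_sort

lemma sortVec_comp_symm_sort_comp (y : Fin m → ℝ) (σ : Equiv.Perm (Fin m)) :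
    sortVec y ∘ (Tuple.sort (y ∘ σ)).symm = y ∘ σ := by
  rw [← sortVec_comp_perm y σ]
  ext j
  simp [sortVec]

lemma sum_mul_eq_sum_sortVec_mul_comp (x y : Fin m → ℝ) :
    ∑ j, x j * y j = ∑ j, sortVec x j *
      (sortVec y ∘ (Tuple.sort (y ∘ Tuple.sort x)).symm) j := by
  rw [sortVec_comp_symm_sort_comp, ← Equiv.sum_comp (Tuple.sort x) (fun j => x j * y j)]
  rfl

lemma sum_mul_le_sum_sortVec_mul (x y : Fin m → ℝ) :
    ∑ j, x j * y j ≤ ∑ j, sortVec x j * sortVec y j := by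
  rw [sum_mul_eq_sum_sortVec_mul_comp]
  exact ((Tuple.monotone_sort x).monovary (Tuple.monotone_sort y)).sum_mul_comp_perm_le_sum_mul

lemma exists_perm_sortVec_eq_of_sum_mul_eq {x y : Fin m → ℝ}
    (h : ∑ j, sortVec x j * sortVec y j = ∑ j, x j * y j) :
    ∃ π : Equiv.Perm (Fin m), sortVec x = x ∘ π ∧ sortVec y = y ∘ π := by
  set S := Tuple.sort x
  set T := Tuple.sort (y ∘ S)
  have hmv : Monovary (sortVec x) (sortVec y ∘ T.symm) :=
    ((Tuple.monotone_sort x).monovary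
      (Tuple.monotone_sort y)).sum_mul_comp_perm_eq_sum_mul_iff.1
        ((sum_mul_eq_sum_sortVec_mul_comp x y).symm.trans h.symm)
  rw [sortVec_comp_symm_sort_comp] at hmv
  refine ⟨T.trans S, ?_, ?_⟩
  · exact Tuple.unique_monotone (f := x) (Tuple.monotone_sort x)
      (Monovary.monotone_comp_sort (Tuple.monotone_sort x) hmv)
  · calc sortVec y = sortVec (y ∘ S) := (sortVec_comp_perm y S).symm
      _ = y ∘ (T.trans S) := rfl

end Sorting

section Letters

variable {m : ℕ}

def sqDist (x y : Fin m → ℝ) : ℝ := ∑ j, (x j - y j) ^ 2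

lemma sqDist_eq (x y : Fin m → ℝ) :
    sqDist x y = ∑ j, x j ^ 2 + ∑ j, y j ^ 2 - 2 * ∑ j, x j * y j := by
  simp only [sqDist, sub_sq, Finset.sum_add_distrib, Finset.sum_sub_distrib, Finset.mul_sum]
  ring_nf

lemma sqDist_sortVec (x y : Fin m → ℝ) :
    sqDist (sortVec x) (sortVec y)
      = sqDist x y - 2 * (∑ j, sortVec x j * sortVec y j - ∑ j, x j * y j) := by
  rw [sqDist_eq, sqDist_eq, sum_comp_sortVec (· ^ 2), sum_comp_sortVec (· ^ 2)]
  ring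

lemma sqDist_sortVec_le (x y : Fin m → ℝ) : sqDist (sortVec x) (sortVec y) ≤ sqDist x y := by
  linarith [sqDist_sortVec x y, sum_mul_le_sum_sortVec_mul x y]

lemma sqDist_shiftVec (i : Fin m) (x y : Fin m → ℝ) :
    sqDist (shiftVec m i x) (shiftVec m i y) = sqDist x y := by
  simp only [sqDist, shiftVec]
  ring_nf

lemma sqDist_letterV_le (i : Fin m) (x y : Fin m → ℝ) :
    sqDist (letterV m i x) (letterV m i y) ≤ sqDist x y :=
  (sqDist_sortVec_le _ _).trans_eq (sqDist_shiftVec i x y)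

lemma exists_perm_of_sqDist_letterV_eq {i : Fin m} {x y : Fin m → ℝ}
    (h : sqDist (letterV m i x) (letterV m i y) = sqDist x y) :
    ∃ π : Equiv.Perm (Fin m),
      letterV m i x = shiftVec m i x ∘ π ∧ letterV m i y = shiftVec m i y ∘ π := by
  refine exists_perm_sortVec_eq_of_sum_mul_eq ?_
  have := sqDist_sortVec (shiftVec m i x) (shiftVec m i y)
  rw [sqDist_shiftVec] at this
  unfold letterV at h
  linarith

lemma sum_letterV (i : Fin m) (x : Fin m → ℝ) : ∑ j, letterV m i x j = ∑ j, x j := by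
  refine (Equiv.sum_comp (Tuple.sort _) (shiftVec m i x)).trans ?_
  simp [shiftVec, Finset.sum_add_distrib]

lemma monotone_letterV (i : Fin m) (x : Fin m → ℝ) : Monotone (letterV m i x) :=
  Tuple.monotone_sort _

lemma stepsV_succ (q : ℕ → Fin m) (x : Fin m → ℝ) (k : ℕ) :
    stepsV m q x (k + 1) = letterV m (q k) (stepsV m q x k) := rfl

lemma stepsV_add (q : ℕ → Fin m) (x : Fin m → ℝ) (a s : ℕ) :
    stepsV m q x (a + s) = stepsV m (fun i => q (a + i)) (stepsV m q x a) s := by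
  induction s with
  | zero => rfl
  | succ s ih => rw [← add_assoc, stepsV_succ, ih, stepsV_succ]

lemma sum_stepsV (q : ℕ → Fin m) (x : Fin m → ℝ) (k : ℕ) :
    ∑ j, stepsV m q x k j = ∑ j, x j := by
  induction k with
  | zero => rfl
  | succ k ih => rw [stepsV_succ, sum_letterV, ih]

lemma monotone_stepsV (q : ℕ → Fin m) {x : Fin m → ℝ} (hx : Monotone x) :
    ∀ k, Monotone (stepsV m q x k)
  | 0 => hx
  | _ + 1 => monotone_letterV _ _

end Letters

section ResidueSystem

open AddCommGroup

variable {m : ℕ}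

lemma sum_natCast_fin_val : ∀ m : ℕ, ∑ j : Fin m, ((j : ℕ) : ℝ) = m * (m - 1) / 2
  | 0 => by simp
  | m + 1 => by
    simp only [Fin.sum_univ_castSucc, Fin.val_castSucc, Fin.val_last]
    rw [sum_natCast_fin_val m]
    push_cast
    ring

lemma Fin.eq_of_natCast_val_modEq {c c' : Fin m}
    (h : ((c : ℕ) : ℝ) ≡ ((c' : ℕ) : ℝ) [PMOD (m : ℝ)]) : c = c' := by
  have hm : (0 : ℝ) < m := by exact_mod_cast c.pos
  have hmem : ∀ c : Fin m, ((c : ℕ) : ℝ) ∈ Set.Ico 0 (0 + (m : ℝ)) := fun c =>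
    ⟨by positivity, by rw [zero_add]; exact_mod_cast c.isLt⟩
  have := (toIcoMod_inj hm (c := 0)).2 h
  rw [(toIcoMod_eq_self hm).2 (hmem c), (toIcoMod_eq_self hm).2 (hmem c')] at this
  exact Fin.ext (by exact_mod_cast this)

structure IsCompleteResidueSystem (m : ℕ) (x : Fin m → ℝ) : Prop where
  exists_intCast_sub : ∀ i j, ∃ z : ℤ, x i - x j = z
  eq_of_modEq : ∀ i j, x i ≡ x j [PMOD (m : ℝ)] → i = j

lemma isCompleteResidueSystem_fundCentroid (m : ℕ) :
    IsCompleteResidueSystem m (fundCentroid m) where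
  exists_intCast_sub i j := ⟨(i : ℤ) - j, by simp [fundCentroid]⟩
  eq_of_modEq i j h := Fin.eq_of_natCast_val_modEq (h.sub_right_cancel' _)

lemma shiftVec_modEq (i : Fin m) (x : Fin m → ℝ) (j : Fin m) :
    x j - 1 ≡ shiftVec m i x j [PMOD (m : ℝ)] := by
  unfold shiftVec
  split_ifs
  · exact modEq_iff_eq_add_zsmul.2 ⟨1, by simp⟩
  · simp

lemma monotone_fundCentroid (m : ℕ) : Monotone (fundCentroid m) := fun i j hij => by
  simpa [fundCentroid] using hij

lemma sum_fundCentroid (m : ℕ) : ∑ j, fundCentroid m j = 0 := by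
  simp only [fundCentroid, Finset.sum_sub_distrib, sum_natCast_fin_val, Finset.sum_const,
    Finset.card_univ, Fintype.card_fin, nsmul_eq_mul]
  ring

namespace IsCompleteResidueSystem

variable {x y : Fin m → ℝ}

lemma injective (hx : IsCompleteResidueSystem m x) : Function.Injective x := fun i j h =>
  hx.eq_of_modEq i j (h ▸ modEq_rfl)

lemma comp_perm (hx : IsCompleteResidueSystem m x) (σ : Equiv.Perm (Fin m)) :
    IsCompleteResidueSystem m (x ∘ σ) where
  exists_intCast_sub i j := hx.exists_intCast_sub (σ i) (σ j)
  eq_of_modEq _ _ h := σ.injective (hx.eq_of_modEq _ _ h)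

lemma shiftVec (hx : IsCompleteResidueSystem m x) (i : Fin m) :
    IsCompleteResidueSystem m (shiftVec m i x) where
  exists_intCast_sub a b := by
    obtain ⟨w, hw⟩ := hx.exists_intCast_sub a b
    obtain ⟨za, ha⟩ := modEq_iff_eq_add_zsmul.1 (shiftVec_modEq i x a)
    obtain ⟨zb, hb⟩ := modEq_iff_eq_add_zsmul.1 (shiftVec_modEq i x b)
    refine ⟨w + (za - zb) * m, ?_⟩
    rw [ha, hb, zsmul_eq_mul, zsmul_eq_mul]
    push_cast
    linarith
  eq_of_modEq a b h := hx.eq_of_modEq a b <|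
    ((shiftVec_modEq i x a).trans (h.trans (shiftVec_modEq i x b).symm)).sub_right_cancel' 1

lemma letterV (hx : IsCompleteResidueSystem m x) (i : Fin m) :
    IsCompleteResidueSystem m (letterV m i x) :=
  (hx.shiftVec i).comp_perm _

lemma stepsV (hx : IsCompleteResidueSystem m x) (q : ℕ → Fin m) :
    ∀ k, IsCompleteResidueSystem m (stepsV m q x k)
  | 0 => hx
  | k + 1 => (hx.stepsV q k).letterV (q k)

lemma of_forall_exists_modEq (b : Fin m)
    (h : ∀ c : Fin m, ∃ j, x b - (c : ℕ) ≡ x j [PMOD (m : ℝ)]) :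
    IsCompleteResidueSystem m x := by
  choose f hf using h
  have hinj : Function.Injective f := fun c c' hcc' =>
    Fin.eq_of_natCast_val_modEq ((hf c).trans ((hcc' ▸ hf c').symm) |>.sub_left_cancel' _)
  have hsurj := Finite.injective_iff_surjective.1 hinj
  constructor
  · intro i j
    obtain ⟨c, rfl⟩ := hsurj i
    obtain ⟨c', rfl⟩ := hsurj j
    obtain ⟨z, hz⟩ := modEq_iff_eq_add_zsmul.1 (hf c)
    obtain ⟨z', hz'⟩ := modEq_iff_eq_add_zsmul.1 (hf c')
    refine ⟨c' - c + (z - z') * m, ?_⟩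
    rw [hz, hz', zsmul_eq_mul, zsmul_eq_mul]
    push_cast
    ring
  · intro i j hij
    obtain ⟨c, rfl⟩ := hsurj i
    obtain ⟨c', rfl⟩ := hsurj j
    rw [Fin.eq_of_natCast_val_modEq (((hf c).trans (hij.trans (hf c').symm)).sub_left_cancel' _)]

variable (hm : (0 : ℝ) < m)
include hm

lemma exists_fin_toIcoMod_sub (hx : IsCompleteResidueSystem m x) (i j : Fin m) :
    ∃ c : Fin m, toIcoMod hm 0 (x j - x i) = ((c : ℕ) : ℝ) := by
  obtain ⟨z, hz⟩ := hx.exists_intCast_sub j i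
  set w : ℤ := z - toIcoDiv hm 0 (x j - x i) * m
  have hw : toIcoMod hm 0 (x j - x i) = w := by
    rw [← self_sub_toIcoDiv_zsmul, hz, zsmul_eq_mul]
    push_cast [w, hz]
    ring
  have hmem := toIcoMod_mem_Ico hm 0 (x j - x i)
  rw [hw, zero_add] at hmem
  have h0 : 0 ≤ w := by exact_mod_cast hmem.1
  have hlt : w < m := by exact_mod_cast hmem.2
  refine ⟨⟨w.toNat, by omega⟩, ?_⟩
  rw [hw]
  exact_mod_cast (Int.toNat_of_nonneg h0).symm

lemma sum_toIcoMod_sub (hx : IsCompleteResidueSystem m x) (i : Fin m) :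
    ∑ j, toIcoMod hm 0 (x j - x i) = m * (m - 1) / 2 := by
  choose c hc using hx.exists_fin_toIcoMod_sub hm i
  have hinj : Function.Injective c := fun j j' hjj' =>
    hx.eq_of_modEq j j' <| ((toIcoMod_inj hm).1 (by rw [hc, hc, hjj'])).sub_right_cancel' _
  rw [Finset.sum_congr rfl fun j _ => hc j]
  exact (Equiv.sum_comp (Equiv.ofBijective c (Finite.injective_iff_bijective.1 hinj))
    (fun c : Fin m => ((c : ℕ) : ℝ))).trans (sum_natCast_fin_val m)

lemma sum_sub_mul_apply (hx : IsCompleteResidueSystem m x) (i : Fin m) :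
    ∑ j, x j - m * x i = m * (m - 1) / 2 + m * ∑ j, (toIcoDiv hm 0 (x j - x i) : ℝ) := by
  have hdecomp : ∀ j, x j - x i = toIcoMod hm 0 (x j - x i) + toIcoDiv hm 0 (x j - x i) * m :=
    fun j => by rw [← zsmul_eq_mul, toIcoMod_add_toIcoDiv_zsmul]
  have hsum : ∑ j, (x j - x i) = ∑ j, x j - m * x i := by simp [Finset.sum_sub_distrib]
  rw [← hsum, Finset.sum_congr rfl fun j _ => hdecomp j, Finset.sum_add_distrib,
    hx.sum_toIcoMod_sub hm, ← Finset.sum_mul]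
  ring

lemma sub_eq_sum_toIcoDiv (hx : IsCompleteResidueSystem m x)
    (hy : IsCompleteResidueSystem m y) (hsum : ∑ j, x j = ∑ j, y j) (i : Fin m) :
    x i - y i = ((∑ j, (toIcoDiv hm 0 (y j - y i) - toIcoDiv hm 0 (x j - x i)) : ℤ) : ℝ) := by
  have hx' := hx.sum_sub_mul_apply hm i
  have hy' := hy.sum_sub_mul_apply hm i
  apply mul_left_cancel₀ hm.ne'
  push_cast
  rw [Finset.sum_sub_distrib]
  linarith

lemma toIcoDiv_sub_eq_of_le (hx : IsCompleteResidueSystem m x)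
    (hy : IsCompleteResidueSystem m y)
    (h : ∀ i j, toIcoDiv hm 0 (y j - y i) • (m : ℝ) ≤ x j - x i) (i j : Fin m) :
    toIcoDiv hm 0 (x j - x i) = toIcoDiv hm 0 (y j - y i) := by
  rcases eq_or_ne i j with rfl | hij
  · simp
  set k := toIcoDiv hm 0 (y j - y i)
  have hy_ne : ¬ (0 : ℝ) ≡ y j - y i [PMOD (m : ℝ)] := fun hmod =>
    hij (hy.eq_of_modEq i j (by simpa using hmod.add_right (y i)))
  have hk' : toIcoDiv hm 0 (y i - y j) = -(k + 1) := by
    rw [← neg_sub, toIcoDiv_neg, neg_zero, ← (not_modEq_iff_toIcoDiv_eq_toIocDiv hm).1 hy_ne]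
  have hlo := h i j
  have hhi := h j i
  rw [hk', zsmul_eq_mul] at hhi
  rw [zsmul_eq_mul] at hlo
  have hne : x j - x i - k * m ≠ m := fun heq => hij <| hx.eq_of_modEq i j <|
    modEq_iff_eq_add_zsmul.2 ⟨k + 1, by push_cast [zsmul_eq_mul]; linarith⟩
  refine toIcoDiv_eq_of_sub_zsmul_mem_Ico hm ⟨?_, ?_⟩
  · rw [zsmul_eq_mul]; linarith
  · rw [zsmul_eq_mul, zero_add]
    push_cast at hhi
    exact lt_of_le_of_ne (by linarith) hne

lemma eq_of_forall_le (hx : IsCompleteResidueSystem m x) (hy : IsCompleteResidueSystem m y)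
    (hsum : ∑ j, x j = ∑ j, y j)
    (h : ∀ i j, toIcoDiv hm 0 (y j - y i) • (m : ℝ) ≤ x j - x i) : x = y := by
  funext i
  have := hx.sub_eq_sum_toIcoDiv hm hy hsum i
  simp only [hx.toIcoDiv_sub_eq_of_le hm hy h, sub_self, Finset.sum_const_zero,
    Int.cast_zero] at this
  linarith

end IsCompleteResidueSystem

end ResidueSystem

section Slots

open AddCommGroup

variable {m : ℕ}

/-- `slot π s b` is the slot occupied after `s` steps by the coordinate that started in slot
`b`, when step `s` permutes slots by `π s`. -/
def slot (π : ℕ → Equiv.Perm (Fin m)) : ℕ → Equiv.Perm (Fin m)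
  | 0 => 1
  | s + 1 => (π s)⁻¹ * slot π s

def FollowsShifts (q : ℕ → Fin m) (π : ℕ → Equiv.Perm (Fin m)) (v : ℕ → Fin m → ℝ) :
    Prop :=
  ∀ s, v (s + 1) = shiftVec m (q s) (v s) ∘ π s

def ReturnsInEveryResidue (w : ℕ → Fin m → ℝ) : Prop :=
  ∀ c : ℤ, ∀ s₀ : ℕ, ∃ s ≥ s₀, w s = w 0 ∧ (c : ℝ) ≡ s [PMOD (m : ℝ)]

lemma followsShifts_stepsV (q : ℕ → Fin m) (x : Fin m → ℝ) :
    FollowsShifts q (fun s => Tuple.sort (shiftVec m (q s) (stepsV m q x s))) (stepsV m q x) :=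
  fun _ => rfl

namespace FollowsShifts

variable {q : ℕ → Fin m} {π : ℕ → Equiv.Perm (Fin m)} {v w : ℕ → Fin m → ℝ}

lemma apply_slot_succ (hv : FollowsShifts q π v) (s : ℕ) (b : Fin m) :
    v (s + 1) (slot π (s + 1) b) = shiftVec m (q s) (v s) (slot π s b) := by
  simp [hv s, slot]

lemma modEq_apply_slot (hv : FollowsShifts q π v) (b : Fin m) :
    ∀ s : ℕ, v 0 b - s ≡ v s (slot π s b) [PMOD (m : ℝ)]
  | 0 => by simp [slot]
  | s + 1 => by
    rw [hv.apply_slot_succ, Nat.cast_succ, ← sub_sub]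
    exact ((hv.modEq_apply_slot b s).sub_right 1).trans (shiftVec_modEq _ _ _)

lemma sub_apply_slot (hv : FollowsShifts q π v) (hw : FollowsShifts q π w) (b : Fin m) :
    ∀ s : ℕ, v s (slot π s b) - w s (slot π s b) = v 0 b - w 0 b
  | 0 => by simp [slot]
  | s + 1 => by
    rw [hv.apply_slot_succ, hw.apply_slot_succ, ← hv.sub_apply_slot hw b s]
    simp only [shiftVec]
    ring

lemma apply_slot_ne (hw : FollowsShifts q π w) (hw0 : IsCompleteResidueSystem m (w 0))
    {b b' : Fin m} (hb : b ≠ b') (s : ℕ) : w s (slot π s b) ≠ w s (slot π s b') :=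
  fun heq => hb <| hw0.eq_of_modEq b b' <| ((hw.modEq_apply_slot b s).trans
    (heq ▸ (hw.modEq_apply_slot b' s).symm)).sub_right_cancel' _

lemma exists_ge_apply_slot_lt (hw : FollowsShifts q π w) (hwm : ∀ s, Monotone (w s))
    (hw0 : IsCompleteResidueSystem m (w 0)) (hret : ReturnsInEveryResidue w)
    {b b' : Fin m} (hb : b ≠ b') (s₀ : ℕ) :
    ∃ s ≥ s₀, w s (slot π s b') < w s (slot π s b) := by
  set top : Fin m := ⟨m - 1, by have := b.isLt; omega⟩
  obtain ⟨c, hc⟩ := hw0.exists_intCast_sub b top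
  obtain ⟨s, hs₀, hws, hcs⟩ := hret c s₀
  have hslot := hw.modEq_apply_slot b s
  rw [hws] at hslot
  have htop : slot π s b = top := by
    refine hw0.eq_of_modEq _ _ (hslot.symm.trans ?_)
    have := (hcs.sub_left (w 0 b)).symm
    rwa [← hc, sub_sub_cancel] at this
  have hlt : slot π s b' < top := by
    have hne : slot π s b' ≠ top := htop ▸ (slot π s).injective.ne hb.symm
    rw [Ne, Fin.ext_iff] at hne
    have := (slot π s b').isLt
    rw [Fin.lt_def]
    simp only [top] at hne ⊢
    omega
  refine ⟨s, hs₀, ?_⟩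
  rw [hws, htop]
  exact (hwm 0).strictMono_of_injective hw0.injective hlt

lemma exists_crossing (hw : FollowsShifts q π w) (hwm : ∀ s, Monotone (w s))
    (hw0 : IsCompleteResidueSystem m (w 0)) (hret : ReturnsInEveryResidue w)
    {b b' : Fin m} (hb : b ≠ b') :
    ∃ s, w s (slot π s b) < w s (slot π s b') ∧
      w (s + 1) (slot π (s + 1) b') < w (s + 1) (slot π (s + 1) b) := by
  obtain ⟨s₁, -, hs₁⟩ := hw.exists_ge_apply_slot_lt hwm hw0 hret hb.symm 0
  obtain ⟨s₂, hs₁₂, hs₂⟩ := hw.exists_ge_apply_slot_lt hwm hw0 hret hb s₁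
  obtain ⟨k, hk, hk₁⟩ := Nat.exists_not_and_succ_of_not_zero_of_exists
    (p := fun k => w (s₁ + k) (slot π (s₁ + k) b') < w (s₁ + k) (slot π (s₁ + k) b))
    (by simpa using hs₁.le) ⟨s₂ - s₁, by simpa [Nat.add_sub_cancel' hs₁₂] using hs₂⟩
  exact ⟨s₁ + k, lt_of_le_of_ne (not_lt.1 hk) (hw.apply_slot_ne hw0 hb _), hk₁⟩

/-- At the step where `b` jumps over `b'`, their gap is `toIcoMod` of `w 0 b' - w 0 b`, and
the coordinates of `v` that travel with them are still in the same order. -/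
lemma toIcoDiv_zsmul_le (hm : (0 : ℝ) < m) (hv : FollowsShifts q π v)
    (hw : FollowsShifts q π w) (hvm : ∀ s, Monotone (v s)) (hwm : ∀ s, Monotone (w s))
    (hw0 : IsCompleteResidueSystem m (w 0)) (hret : ReturnsInEveryResidue w) (b b' : Fin m) :
    toIcoDiv hm 0 (w 0 b' - w 0 b) • (m : ℝ) ≤ v 0 b' - v 0 b := by
  rcases eq_or_ne b b' with rfl | hb
  · simp
  obtain ⟨s, hlt, hlt₁⟩ := hw.exists_crossing hwm hw0 hret hb
  have hgap : w s (slot π s b') - w s (slot π s b) < m := by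
    rw [hw.apply_slot_succ, hw.apply_slot_succ] at hlt₁
    simp only [shiftVec] at hlt₁
    split_ifs at hlt₁ <;> linarith
  have hmod : toIcoMod hm 0 (w 0 b' - w 0 b) = w s (slot π s b') - w s (slot π s b) := by
    rw [← (toIcoMod_eq_self hm).2 ⟨(sub_pos.2 hlt).le, by rwa [zero_add]⟩, toIcoMod_inj]
    simpa using (hw.modEq_apply_slot b' s).sub (hw.modEq_apply_slot b s)
  have hord : v s (slot π s b) ≤ v s (slot π s b') := hvm s ((hwm s).reflect_lt hlt).le
  have hb₁ := hv.sub_apply_slot hw b s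
  have hb₂ := hv.sub_apply_slot hw b' s
  rw [← self_sub_toIcoMod, hmod]
  linarith

end FollowsShifts

lemma ReturnsInEveryResidue.isCompleteResidueSystem (hm : 0 < m) {q : ℕ → Fin m}
    {x : Fin m → ℝ} (hret : ReturnsInEveryResidue (stepsV m q x)) :
    IsCompleteResidueSystem m x := by
  refine IsCompleteResidueSystem.of_forall_exists_modEq ⟨0, hm⟩ fun c => ?_
  obtain ⟨s, -, hs, hcs⟩ := hret (c : ℕ) 0
  have hslot := (followsShifts_stepsV q x).modEq_apply_slot ⟨0, hm⟩ s
  rw [hs] at hslot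
  exact ⟨_, (hcs.sub_left _).trans hslot⟩

end Slots

section Convergence

open AddCommGroup

variable {m : ℕ}

lemma stepsV_congr {q q' : ℕ → Fin m} {k : ℕ} (h : ∀ i < k, q i = q' i) (x : Fin m → ℝ) :
    stepsV m q x k = stepsV m q' x k := by
  induction k with
  | zero => rfl
  | succ k ih =>
    rw [stepsV_succ, stepsV_succ, h k k.lt_succ_self,
      ih fun i hi => h i (hi.trans k.lt_succ_self)]

lemma stepsV_mul_add {n : ℕ} {q : ℕ → Fin m} (hq : ∀ i, q (n + i) = q i) (x : Fin m → ℝ)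
    (a s : ℕ) : stepsV m q x (n * a + s) = stepsV m q (stepsV m q x (n * a)) s := by
  have hqa : ∀ a i, q (n * a + i) = q i := fun a => by
    induction a with
    | zero => simp
    | succ a ih => intro i; rw [mul_add_one, add_comm _ n, add_assoc, hq, ih]
  rw [stepsV_add]
  simp only [hqa]

lemma stepsV_mul_of_stepsV_eq {n : ℕ} {q : ℕ → Fin m} (hq : ∀ i, q (n + i) = q i)
    {x : Fin m → ℝ} (hfix : stepsV m q x n = x) (t : ℕ) : stepsV m q x (n * t) = x := by
  induction t with
  | zero => rfl
  | succ t ih => rw [mul_add_one, stepsV_mul_add hq, ih, hfix]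

lemma exists_ge_natCast_mul_modEq {n : ℕ} (hm : 0 < m) (hcop : Nat.Coprime m n) (c : ℤ)
    (t₀ : ℕ) : ∃ t ≥ t₀, (c : ℝ) ≡ ((n * t : ℕ) : ℝ) [PMOD (m : ℝ)] := by
  have hbezout : (1 : ℤ) = m * Nat.gcdA m n + n * Nat.gcdB m n := by
    have := Nat.gcd_eq_gcd_ab m n
    rwa [hcop] at this
  -- `T ≡ c * gcdB` modulo `m`; the summand `m * u` only serves to make `T ≥ t₀`
  set u : ℤ := t₀ + |c * Nat.gcdB m n|
  set T : ℤ := c * Nat.gcdB m n + m * u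
  have hT : (t₀ : ℤ) ≤ T := by
    have : u ≤ m * u := le_mul_of_one_le_left (by positivity) (by exact_mod_cast hm)
    linarith [neg_abs_le (c * Nat.gcdB m n)]
  refine ⟨T.toNat, by omega, modEq_iff_eq_add_zsmul.2 ⟨n * u - c * Nat.gcdA m n, ?_⟩⟩
  have hTnat : ((T.toNat : ℕ) : ℤ) = T := Int.toNat_of_nonneg (by omega)
  have key : ((n * T.toNat : ℕ) : ℤ) = c + (n * u - c * Nat.gcdA m n) * m := by
    push_cast [hTnat, T]
    linear_combination (-c) * hbezout
  rw [zsmul_eq_mul]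
  exact_mod_cast key

lemma returnsInEveryResidue_of_stepsV_mul_eq {n : ℕ} (hm : 0 < m) (hn : 0 < n)
    (hcop : Nat.Coprime m n) {q : ℕ → Fin m} {x : Fin m → ℝ}
    (hper : ∀ t, stepsV m q x (n * t) = x) : ReturnsInEveryResidue (stepsV m q x) := by
  intro c s₀
  obtain ⟨t, ht, hct⟩ := exists_ge_natCast_mul_modEq hm hcop c s₀
  exact ⟨n * t, ht.trans (Nat.le_mul_of_pos_left t hn), hper t, hct⟩

lemma exists_natCast_eq_sqDist {x y : Fin m → ℝ} (h : ∀ j, ∃ z : ℤ, x j - y j = z) :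
    ∃ N : ℕ, sqDist x y = N := by
  choose z hz using h
  refine ⟨∑ j, (z j).natAbs ^ 2, ?_⟩
  simp [sqDist, hz]

lemma exists_sqDist_stepsV_eq (hm : (0 : ℝ) < m) (q : ℕ → Fin m) {x y : Fin m → ℝ}
    (hx : IsCompleteResidueSystem m x) (hy : IsCompleteResidueSystem m y)
    (hsum : ∑ j, x j = ∑ j, y j) :
    ∃ K, ∀ k ≥ K, sqDist (stepsV m q x k) (stepsV m q y k)
      = sqDist (stepsV m q x K) (stepsV m q y K) := by
  have hnat : ∀ k, ∃ N : ℕ, sqDist (stepsV m q x k) (stepsV m q y k) = N := fun k =>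
    exists_natCast_eq_sqDist fun j =>
      ⟨_, (hx.stepsV q k).sub_eq_sum_toIcoDiv hm (hy.stepsV q k)
        (by rw [sum_stepsV, sum_stepsV, hsum]) j⟩
  choose N hN using hnat
  have hanti : Antitone N := antitone_nat_of_succ_le fun k => by
    have := sqDist_letterV_le (q k) (stepsV m q x k) (stepsV m q y k)
    rw [← stepsV_succ, ← stepsV_succ, hN, hN] at this
    exact_mod_cast this
  obtain ⟨K, hK⟩ := WellFoundedLT.antitone_chain_condition hanti
  exact ⟨K, fun k hk => by rw [hN, hN, hK k hk]⟩

lemma eq_of_sqDist_stepsV_succ_eq (hm : (0 : ℝ) < m) (q : ℕ → Fin m) {x y : Fin m → ℝ}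
    (hxm : Monotone x) (hym : Monotone y)
    (hx : IsCompleteResidueSystem m x) (hy : IsCompleteResidueSystem m y)
    (hsum : ∑ j, x j = ∑ j, y j) (hret : ReturnsInEveryResidue (stepsV m q y))
    (hconst : ∀ s, sqDist (stepsV m q x (s + 1)) (stepsV m q y (s + 1))
      = sqDist (stepsV m q x s) (stepsV m q y s)) : x = y := by
  choose π hπx hπy using fun s => exists_perm_of_sqDist_letterV_eq (hconst s)
  exact hx.eq_of_forall_le hm hy hsum <|
    FollowsShifts.toIcoDiv_zsmul_le hm (v := stepsV m q x) (w := stepsV m q y) hπx hπy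
      (monotone_stepsV q hxm) (monotone_stepsV q hym) hy hret

end Convergence

theorem centroid_converges_general (m n : ℕ) (hm : 0 < m) (hn : 0 < n)
    (hcop : Nat.gcd m n = 1) (p : ℕ → Fin m)
    (xp : Fin m → ℝ) (hxp : InV m xp) (hfix : stepsV m p xp n = xp) :
    ∃ K : ℕ, ∀ k ≥ K, stepsV m (fun i => p (i % n)) (fundCentroid m) (n * k) = xp := by
  set q : ℕ → Fin m := fun i => p (i % n)
  have hm' : (0 : ℝ) < m := by exact_mod_cast hm
  have hq : ∀ i, q (n + i) = q i := fun i => by simp [q]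
  have hper : ∀ t, stepsV m q xp (n * t) = xp := stepsV_mul_of_stepsV_eq hq <| by
    rw [stepsV_congr (q' := p) (fun i hi => by simp [q, Nat.mod_eq_of_lt hi]), hfix]
  have hret := returnsInEveryResidue_of_stepsV_mul_eq hm hn hcop hper
  have hxpR := hret.isCompleteResidueSystem hm
  have h0R := isCompleteResidueSystem_fundCentroid m
  have hsum : ∑ j, fundCentroid m j = ∑ j, xp j := by rw [hxp.1, sum_fundCentroid]
  obtain ⟨K, hK⟩ := exists_sqDist_stepsV_eq hm' q h0R hxpR hsum
  have hdist : ∀ s, sqDist (stepsV m q (stepsV m q (fundCentroid m) (n * K)) s)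
      (stepsV m q xp s) = sqDist (stepsV m q (fundCentroid m) K) (stepsV m q xp K) := fun s => by
    rw [← stepsV_mul_add hq, ← hper K, ← stepsV_mul_add hq, hper]
    exact hK _ (le_add_right (Nat.le_mul_of_pos_left K hn))
  have hstart : stepsV m q (fundCentroid m) (n * K) = xp :=
    eq_of_sqDist_stepsV_succ_eq hm' q (monotone_stepsV q (monotone_fundCentroid m) _) hxp.2
      (h0R.stepsV q _) hxpR (by rw [sum_stepsV, hsum]) hret
      (fun s => (hdist (s + 1)).trans (hdist s).symm)
  refine ⟨K, fun k hk => ?_⟩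
  obtain ⟨t, rfl⟩ := Nat.exists_eq_add_of_le hk
  rw [mul_add, stepsV_mul_add hq, hstart, hper]

/-- When `gcd(m,n) = 1` and `p` is an `(m,n)`-parking function with fixed point
`x_p`, the iterates `p^k ⋅ x_0` of the centroid of the fundamental alcove reach
`x_p` in finitely many steps: `p^k ⋅ x_0 = x_p` for all sufficiently large `k`. -/
theorem centroid_converges (m n : ℕ) (hm : 0 < m) (hn : 0 < n)
    (hcop : Nat.gcd m n = 1) (p : ℕ → Fin m) (hpark : IsParking m n p)
    (xp : Fin m → ℝ) (hxp : InV m xp) (hfix : stepsV m p xp n = xp) :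
    ∃ K : ℕ, ∀ k ≥ K, stepsV m (fun i => p (i % n)) (fundCentroid m) (n * k) = xp :=
  centroid_converges_general m n hm hn hcop p xp hxp hfix
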